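/- arXiv:2509.14106 — 2 statements merged into one kernel-verified Lean document; each statement's English description precedes it below -/
import Mathlib

section
/- If F_j ∈ ℝ^{q_j × n} for j in a finite index set J, the stacked matrix F = col(F_j) has rank n, and (S_k^j) are sets with sup_{k} D(S_k^j) < ∞ for each j, then the diameters of the intersections ⋂_{j∈J} (ker(F_j) + S_k^j) are uniformly bounded over k. -/
open scoped Pointwise ENNReal

/-- If the kernels of finitely many matrices `F j` intersect trivially (i.e. the
stacked matrix has full column rank) and each family of sets `S j k` has
uniformly bounded diameter in `k`, then the intersections
`⋂ j (ker (F j) + S j k)` have uniformly bounded diameters over `k`. -/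
theorem diam_iInter_ker_add_bounded
    (n : ℕ) {J : Type*} [Fintype J]
    (q : J → ℕ) (F : ∀ j, Matrix (Fin (q j)) (Fin n) ℝ)
    (hF : (⋂ j, {x : EuclideanSpace ℝ (Fin n) | Matrix.toEuclideanLin (F j) x = 0}) = {0})
    (S : J → ℕ → Set (EuclideanSpace ℝ (Fin n)))
    (hS : ∀ j, (⨆ k : ℕ, EMetric.diam (S j k)) < ⊤) :
    (⨆ k : ℕ, EMetric.diam
      (⋂ j, ({x : EuclideanSpace ℝ (Fin n) | Matrix.toEuclideanLin (F j) x = 0} + S j k))) < ⊤ := by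
  classical
  set T : ∀ j, EuclideanSpace ℝ (Fin n) →ₗ[ℝ] EuclideanSpace ℝ (Fin (q j)) :=
    fun j => Matrix.toEuclideanLin (F j) with hT
  set L : EuclideanSpace ℝ (Fin n) →ₗ[ℝ] (∀ j, EuclideanSpace ℝ (Fin (q j))) := LinearMap.pi T with hL
  have hker : LinearMap.ker L = ⊥ := by
    rw [LinearMap.ker_eq_bot']
    intro x hx
    have hmem : x ∈ (⋂ j, {x : EuclideanSpace ℝ (Fin n) | Matrix.toEuclideanLin (F j) x = 0}) := by
      simp only [Set.mem_iInter, Set.mem_setOf_eq]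
      intro j
      have h0 : L x j = 0 := by rw [hx]; rfl
      simpa [hL, LinearMap.pi_apply, hT] using h0
    rw [hF] at hmem
    exact hmem
  obtain ⟨K, hK0, hKanti⟩ := L.exists_antilipschitzWith hker
  -- continuous versions of the T j, for operator norms
  let Tc : ∀ j, EuclideanSpace ℝ (Fin n) →L[ℝ] EuclideanSpace ℝ (Fin (q j)) :=
    fun j => (T j).toContinuousLinearMap
  set D : J → ℝ≥0∞ := fun j => ⨆ k : ℕ, EMetric.diam (S j k) with hD
  set M : ℝ := ∑ j, ‖Tc j‖ * (D j).toReal with hM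
  have hMnonneg : 0 ≤ M := Finset.sum_nonneg fun j _ =>
    mul_nonneg (norm_nonneg _) ENNReal.toReal_nonneg
  refine lt_of_le_of_lt (iSup_le fun k => ?_)
    (show ENNReal.ofReal ((K : ℝ) * M) < ⊤ from ENNReal.ofReal_lt_top)
  apply EMetric.diam_le
  intro x hx y hy
  rw [edist_dist]
  apply ENNReal.ofReal_le_ofReal
  -- coordinatewise bound
  have hcoord : ∀ j, dist (L x j) (L y j) ≤ M := by
    intro j
    have hxj := Set.mem_iInter.mp hx j
    have hyj := Set.mem_iInter.mp hy j
    obtain ⟨zx, hzx, sx, hsx, hxeq⟩ := hxj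
    obtain ⟨zy, hzy, sy, hsy, hyeq⟩ := hyj
    have hTx : T j x = T j sx := by
      rw [← hxeq, map_add]
      simp only [Set.mem_setOf_eq] at hzx
      rw [hT]
      simp [hzx]
    have hTy : T j y = T j sy := by
      rw [← hyeq, map_add]
      simp only [Set.mem_setOf_eq] at hzy
      rw [hT]
      simp [hzy]
    have hLx : L x j = T j x := rfl
    have hLy : L y j = T j y := rfl
    rw [hLx, hLy, hTx, hTy, dist_eq_norm]
    have h1 : ‖T j sx - T j sy‖ = ‖Tc j (sx - sy)‖ := by
      simp [Tc, map_sub]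
    rw [h1]
    have h2 : ‖Tc j (sx - sy)‖ ≤ ‖Tc j‖ * ‖sx - sy‖ := (Tc j).le_opNorm _
    have h3 : ‖sx - sy‖ ≤ (D j).toReal := by
      rw [← dist_eq_norm, dist_edist]
      apply ENNReal.toReal_mono (hS j).ne
      exact le_trans (EMetric.edist_le_diam_of_mem hsx hsy) (le_iSup (fun k => EMetric.diam (S j k)) k)
    have h4 : ‖Tc j‖ * ‖sx - sy‖ ≤ ‖Tc j‖ * (D j).toReal :=
      mul_le_mul_of_nonneg_left h3 (norm_nonneg _)
    refine le_trans (le_trans h2 h4) ?_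
    exact Finset.single_le_sum
      (fun i _ => mul_nonneg (norm_nonneg _) ENNReal.toReal_nonneg)
      (Finset.mem_univ j)
  have hLdist : dist (L x) (L y) ≤ M := (dist_pi_le_iff hMnonneg).mpr hcoord
  calc dist x y ≤ K * dist (L x) (L y) := hKanti.le_mul_dist x y
    _ ≤ K * M := mul_le_mul_of_nonneg_left hLdist K.2
end

section
/- Uniform boundedness of set-valued signals propagates through a bounded-gain recursion: if D(C_j) ≤ M for all j ≥ j₀, D(W_j) ≤ M' for all j, A_ō satisfies sup_k ∑_{j=j₀}^{k-1} ‖A_ō^{k-1-j} restricted to the contracting part‖ < ∞ via a splitting Q with Q_{=1}A_21 = 0 and Q_{=1}B_ō = 0, then the sets S_k = ∑_{j=j₀}^{k-1} A_ō^{k-1-j}(A_21 C_j + B_ō W_j) have uniformly bounded diameter. -/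
/-!
A summand `A^n (A₂₁ c + B w)` of `S_k` has diameter at most `‖A^n A₂₁‖ D(C_j) + ‖A^n B‖ D(W_j)`,
so `D(S_k)` is bounded by a partial sum of the series `∑ₙ (‖A^n A₂₁‖ M + ‖A^n B‖ M')`. Since
`Q_{=1}` annihilates `A₂₁` and `B`, conjugation by `Q` turns `A^n A₂₁` into `P [J^n F; 0]`
(with `P Q = 1`), and `ρ(J) < 1` makes `∑ₙ ‖J^n‖` converge by Gelfand's formula.
-/

open scoped Pointwise NNReal ENNReal Matrix.Norms.L2Operator

open Filter Metric

theorem ediam_finset_sum_le {ι E : Type*} [SeminormedAddCommGroup E] (s : Finset ι)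
    (F : ι → Set E) : ediam (∑ i ∈ s, F i) ≤ ∑ i ∈ s, ediam (F i) := by
  classical
  induction s using Finset.induction_on with
  | empty => simp [← Set.singleton_zero]
  | insert a s ha ih =>
    rw [Finset.sum_insert ha, Finset.sum_insert ha]
    exact (ediam_add_le _ _).trans (add_le_add_right ih _)

theorem ENNReal.sum_Ico_sub_le_tsum (f : ℕ → ℝ≥0∞) (a k : ℕ) :
    ∑ j ∈ Finset.Ico a k, f (k - 1 - j) ≤ ∑' n, f n := by
  have hinj : Set.InjOn (fun j => k - 1 - j) (Finset.Ico a k) := by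
    intro x hx y hy hxy
    simp only [Finset.coe_Ico, Set.mem_Ico] at hx hy hxy
    omega
  rw [← Finset.sum_image hinj]
  exact ENNReal.sum_le_tsum _

section SpectralRadius

variable {A : Type*} [NormedRing A] [NormedAlgebra ℂ A] [CompleteSpace A]

theorem spectralRadius_lt_one_of_forall_norm_lt_one {a : A}
    (h : ∀ μ ∈ spectrum ℂ a, ‖μ‖ < 1) : spectralRadius ℂ a < 1 := by
  rcases (spectrum ℂ a).eq_empty_or_nonempty with hempty | hne
  · simp [spectralRadius, hempty]
  · simpa using spectrum.spectralRadius_lt_of_forall_lt_of_nonempty hne (r := 1)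
      fun μ hμ => by exact_mod_cast h μ hμ

/-- By Gelfand's formula, `‖a ^ n‖₊ < r ^ n` eventually, for any `r` above the spectral radius. -/
theorem summable_nnnorm_pow_of_spectralRadius_lt_one {a : A} (h : spectralRadius ℂ a < 1) :
    Summable fun n => ‖a ^ n‖₊ := by
  obtain ⟨r, hρr, hr1⟩ := ENNReal.lt_iff_exists_nnreal_btwn.mp h
  have hev : ∀ᶠ n : ℕ in atTop, (‖a ^ n‖₊ : ℝ≥0∞) ^ (1 / n : ℝ) < r :=
    (spectrum.pow_nnnorm_pow_one_div_tendsto_nhds_spectralRadius a).eventually_lt_const hρr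
  refine NNReal.summable_coe.mp <| Summable.of_norm_bounded_eventually_nat
    (NNReal.summable_coe.mpr <| NNReal.summable_geometric (by exact_mod_cast hr1)) ?_
  filter_upwards [hev, eventually_gt_atTop 0] with n hn hn0
  have hn0' : (0 : ℝ) < n := by exact_mod_cast hn0
  rw [one_div, ← ENNReal.coe_rpow_of_nonneg _ (by positivity), ENNReal.coe_lt_coe,
    NNReal.rpow_inv_lt_iff hn0', NNReal.rpow_natCast] at hn
  rw [NNReal.norm_eq]
  exact_mod_cast hn.le

end SpectralRadius

theorem EuclideanSpace.norm_toLp_ofReal_comp {ι : Type*} [Fintype ι] (x : EuclideanSpace ℝ ι) :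
    ‖(WithLp.toLp 2 (Complex.ofReal ∘ x) : EuclideanSpace ℂ ι)‖ = ‖x‖ := by
  simp [EuclideanSpace.norm_eq]

namespace Matrix

variable {m n p m₁ m₂ : Type*}

theorem mul_pow_eq_pow_mul_of_mul_eq [Fintype m] [Fintype n] [DecidableEq m] [DecidableEq n]
    {R : Type*} [Semiring R] {X : Matrix m n R}
    {A : Matrix n n R} {B : Matrix m m R} (h : X * A = B * X) (k : ℕ) :
    X * A ^ k = B ^ k * X := by
  induction k with
  | zero => simp
  | succ k ih =>
    rw [pow_succ, ← Matrix.mul_assoc, ih, Matrix.mul_assoc, h, ← Matrix.mul_assoc, ← pow_succ]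

theorem exists_mul_eq_one_of_bijective_mulVec [Fintype m] [Fintype n] [DecidableEq m]
    [DecidableEq n] {K : Type*} [Field K] {Q : Matrix m n K}
    (hQ : Function.Bijective Q.mulVec) : ∃ P : Matrix n m K, P * Q = 1 := by
  obtain ⟨P, hQP⟩ := mulVec_surjective_iff_exists_right_inverse.mp hQ.2
  have hcard : Fintype.card m = Fintype.card n := by
    simpa using (LinearEquiv.ofBijective Q.mulVecLin hQ).finrank_eq.symm
  exact ⟨P, (mul_eq_one_comm_of_card_eq _ _ _ hcard).mp hQP⟩

/-- `Q * N` lies in the first block, which `fromBlocks J B 0 L` maps into itself by `J`. -/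
theorem pow_mul_eq_of_mul_eq_fromBlocks_mul [Fintype m] [Fintype m₁] [Fintype m₂] [DecidableEq m]
    [DecidableEq m₁] [DecidableEq m₂] {R : Type*} [CommRing R] {A : Matrix m m R}
    {Q : Matrix (m₁ ⊕ m₂) m R} {P : Matrix m (m₁ ⊕ m₂) R} {J : Matrix m₁ m₁ R}
    {B : Matrix m₁ m₂ R} {L : Matrix m₂ m₂ R} {N : Matrix m p R}
    (hPQ : P * Q = 1) (hsim : Q * A = fromBlocks J B 0 L * Q)
    (hN : Q.submatrix Sum.inr id * N = 0) (k : ℕ) :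
    A ^ k * N = P * fromRows (J ^ k * (Q.submatrix Sum.inl id * N)) (0 : Matrix m₂ p R) := by
  set E : Matrix (m₁ ⊕ m₂) m₁ R := fromRows 1 0
  have hQN : Q * N = E * (Q.submatrix Sum.inl id * N) := by
    rw [fromRows_mul, Matrix.one_mul, Matrix.zero_mul, ← hN, ← fromRows_mul]
    exact congrArg (· * N) (fromRows_toRows Q).symm
  have hE : E * J = fromBlocks J B 0 L * E := by
    simp [E, fromRows_mul, fromBlocks_mul_fromRows]
  calc A ^ k * N = P * (Q * A ^ k) * N := by
        rw [← Matrix.mul_assoc P, hPQ, Matrix.one_mul]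
    _ = P * (fromBlocks J B 0 L ^ k * E) * (Q.submatrix Sum.inl id * N) := by
      rw [mul_pow_eq_pow_mul_of_mul_eq hsim, Matrix.mul_assoc, Matrix.mul_assoc, hQN,
        Matrix.mul_assoc, Matrix.mul_assoc]
    _ = _ := by
      rw [← mul_pow_eq_pow_mul_of_mul_eq hE, Matrix.mul_assoc, Matrix.mul_assoc, fromRows_mul,
        Matrix.one_mul, Matrix.zero_mul]

theorem summable_nnnorm_pow_mul_of_mul_eq_fromBlocks_mul [Fintype m] [Fintype p] [Fintype m₁]
    [Fintype m₂] [DecidableEq m] [DecidableEq p] [DecidableEq m₁] [DecidableEq m₂]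
    {A : Matrix m m ℂ}
    {Q : Matrix (m₁ ⊕ m₂) m ℂ} {J : Matrix m₁ m₁ ℂ} {B : Matrix m₁ m₂ ℂ} {L : Matrix m₂ m₂ ℂ}
    {N : Matrix m p ℂ} (hQ : Function.Bijective Q.mulVec)
    (hsim : Q * A = fromBlocks J B 0 L * Q) (hJ : spectralRadius ℂ J < 1)
    (hN : Q.submatrix Sum.inr id * N = 0) :
    Summable fun k => ‖A ^ k * N‖₊ := by
  obtain ⟨P, hPQ⟩ := exists_mul_eq_one_of_bijective_mulVec hQ
  set E : Matrix (m₁ ⊕ m₂) m₁ ℂ := fromRows 1 0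
  set F := Q.submatrix Sum.inl id * N
  refine NNReal.summable_of_le (fun k => ?_)
    (((summable_nnnorm_pow_of_spectralRadius_lt_one hJ).mul_left (‖P‖₊ * ‖E‖₊)).mul_right ‖F‖₊)
  calc ‖A ^ k * N‖₊ = ‖P * (E * (J ^ k * F))‖₊ := by
        rw [pow_mul_eq_of_mul_eq_fromBlocks_mul hPQ hsim hN, fromRows_mul, Matrix.one_mul,
          Matrix.zero_mul]
    _ ≤ ‖P‖₊ * (‖E‖₊ * (‖J ^ k‖₊ * ‖F‖₊)) := by
      grw [l2_opNNNorm_mul, l2_opNNNorm_mul, l2_opNNNorm_mul]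
    _ = ‖P‖₊ * ‖E‖₊ * ‖J ^ k‖₊ * ‖F‖₊ := by ring

theorem l2_opNorm_le_l2_opNorm_map_ofReal [Fintype m] [Fintype n] [DecidableEq n]
    (M : Matrix m n ℝ) : ‖M‖ ≤ ‖M.map Complex.ofReal‖ := by
  refine ContinuousLinearMap.opNorm_le_bound _ (norm_nonneg _) fun x => ?_
  rw [← EuclideanSpace.norm_toLp_ofReal_comp x, ← EuclideanSpace.norm_toLp_ofReal_comp]
  convert l2_opNorm_mulVec (M.map Complex.ofReal) (WithLp.toLp 2 (Complex.ofReal ∘ x)) using 3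
  ext i
  exact RingHom.map_mulVec Complex.ofRealHom M x.ofLp i

theorem lipschitzWith_toEuclideanLin [Fintype m] [Fintype n] [DecidableEq n]
    (M : Matrix m n ℝ) : LipschitzWith ‖M.map Complex.ofReal‖₊ (toEuclideanLin M) :=
  ((toEuclideanLin.trans LinearMap.toContinuousLinearMap) M).lipschitz.weaken
    (l2_opNorm_le_l2_opNorm_map_ofReal M)

theorem ediam_image_toEuclideanLin_pow_image_le [Fintype n] [Fintype p] [DecidableEq n]
    [DecidableEq p] (A : Matrix n n ℝ) (N : Matrix n p ℝ) (k : ℕ)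
    (s : Set (EuclideanSpace ℝ p)) :
    ediam (toEuclideanLin (A ^ k) '' (toEuclideanLin N '' s))
      ≤ ‖A.map Complex.ofReal ^ k * N.map Complex.ofReal‖₊ * ediam s := by
  have hcomp : toEuclideanLin (A ^ k) ∘ toEuclideanLin N = toEuclideanLin (A ^ k * N) := by
    ext x : 1
    simp
  have hmap :
      A.map Complex.ofReal ^ k * N.map Complex.ofReal = (A ^ k * N).map Complex.ofReal := by
    change _ = (A ^ k * N).map Complex.ofRealHom
    rw [Matrix.map_mul, Matrix.map_pow]
    rfl
  rw [← Set.image_comp, hcomp, hmap]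
  exact (lipschitzWith_toEuclideanLin _).ediam_image_le s

end Matrix

theorem bounded_diam_through_recursion_general
    (m no pdim m1 m2 : ℕ) (j0 : ℕ)
    (Abar : Matrix (Fin m) (Fin m) ℝ)
    (A21 : Matrix (Fin m) (Fin no) ℝ)
    (Bbar : Matrix (Fin m) (Fin pdim) ℝ)
    (Q : Matrix (Fin m1 ⊕ Fin m2) (Fin m) ℂ)
    (J : Matrix (Fin m1) (Fin m1) ℂ) (d : Fin m2 → ℂ)
    (hQ : Function.Bijective Q.mulVec)
    (hsim : Q * (Abar.map (Complex.ofReal))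
      = Matrix.fromBlocks J 0 0 (Matrix.diagonal d) * Q)
    (hJ : ∀ μ ∈ spectrum ℂ J, ‖μ‖ < 1)
    (hQA21 : Q.submatrix Sum.inr id * (A21.map (Complex.ofReal)) = 0)
    (hQBbar : Q.submatrix Sum.inr id * (Bbar.map (Complex.ofReal)) = 0)
    (C : ℕ → Set (EuclideanSpace ℝ (Fin no)))
    (W : ℕ → Set (EuclideanSpace ℝ (Fin pdim)))
    (MC MW : ℝ≥0)
    (hC : ∀ j, j0 ≤ j → EMetric.diam (C j) ≤ MC)
    (hW : ∀ j, EMetric.diam (W j) ≤ MW) :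
    Filter.atTop.limsup (fun k : ℕ => EMetric.diam
      (∑ j ∈ Finset.Ico j0 k,
        (Matrix.toEuclideanLin (Abar ^ (k - 1 - j))) ''
          ((Matrix.toEuclideanLin A21) '' C j
            + (Matrix.toEuclideanLin Bbar) '' W j))) < ⊤ := by
  have hρ := spectralRadius_lt_one_of_forall_norm_lt_one hJ
  set g : ℕ → ℝ≥0 := fun n =>
    ‖Abar.map Complex.ofReal ^ n * A21.map Complex.ofReal‖₊ * MC
      + ‖Abar.map Complex.ofReal ^ n * Bbar.map Complex.ofReal‖₊ * MW
  have hg : Summable g :=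
    ((Matrix.summable_nnnorm_pow_mul_of_mul_eq_fromBlocks_mul hQ hsim hρ hQA21).mul_right MC).add
      ((Matrix.summable_nnnorm_pow_mul_of_mul_eq_fromBlocks_mul hQ hsim hρ hQBbar).mul_right MW)
  refine (limsup_le_of_le (h := Eventually.of_forall fun k => ?_)).trans_lt
    (ENNReal.tsum_coe_ne_top_iff_summable.mpr hg).lt_top
  calc _ ≤ ∑ j ∈ Finset.Ico j0 k, ediam _ := ediam_finset_sum_le _ _
    _ ≤ ∑ j ∈ Finset.Ico j0 k, (g (k - 1 - j) : ℝ≥0∞) := by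
      refine Finset.sum_le_sum fun j hj => ?_
      have hCj : ediam (C j) ≤ MC := hC j (Finset.mem_Ico.mp hj).1
      have hWj : ediam (W j) ≤ MW := hW j
      grw [Set.image_add, ediam_add_le, Matrix.ediam_image_toEuclideanLin_pow_image_le,
        Matrix.ediam_image_toEuclideanLin_pow_image_le, hCj, hWj]
      simp [g]
    _ ≤ ∑' n, (g n : ℝ≥0∞) := ENNReal.sum_Ico_sub_le_tsum _ j0 k

/-- Uniform boundedness propagates through a bounded-gain recursion: if the
sets `C_j` and `W_j` have uniformly bounded diameters, `A_ō` is marginally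
stable and admits an invertible splitting `Q = [Q_{<1}; Q_{=1}]` with
`Q A_ō = diag(J_{<1}, Λ_{=1}) Q`, `Rho(J_{<1}) < 1`, `Λ_{=1}` diagonal unitary,
and `Q_{=1} A_21 = 0`, `Q_{=1} B_ō = 0`, then the Minkowski sums
`S_k = ∑_{j=j₀}^{k-1} A_ō^{k-1-j}(A_21 C_j + B_ō W_j)` satisfy
`limsup_k D(S_k) < ∞`. -/
theorem bounded_diam_through_recursion
    (m no pdim m1 m2 : ℕ) (hm : m1 + m2 = m) (j0 : ℕ)
    (Abar : Matrix (Fin m) (Fin m) ℝ)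
    (A21 : Matrix (Fin m) (Fin no) ℝ)
    (Bbar : Matrix (Fin m) (Fin pdim) ℝ)
    (hmarg : ∀ μ ∈ spectrum ℂ (Abar.map (Complex.ofReal)), ‖μ‖ ≤ 1)
    (Q : Matrix (Fin m1 ⊕ Fin m2) (Fin m) ℂ)
    (J : Matrix (Fin m1) (Fin m1) ℂ) (d : Fin m2 → ℂ)
    (hQ : Function.Bijective Q.mulVec)
    (hsim : Q * (Abar.map (Complex.ofReal))
      = Matrix.fromBlocks J 0 0 (Matrix.diagonal d) * Q)
    (hJ : ∀ μ ∈ spectrum ℂ J, ‖μ‖ < 1)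
    (hd : ∀ i, ‖d i‖ = 1)
    (hQA21 : Q.submatrix Sum.inr id * (A21.map (Complex.ofReal)) = 0)
    (hQBbar : Q.submatrix Sum.inr id * (Bbar.map (Complex.ofReal)) = 0)
    (C : ℕ → Set (EuclideanSpace ℝ (Fin no)))
    (W : ℕ → Set (EuclideanSpace ℝ (Fin pdim)))
    (MC MW : ℝ≥0)
    (hC : ∀ j, j0 ≤ j → EMetric.diam (C j) ≤ MC)
    (hW : ∀ j, EMetric.diam (W j) ≤ MW) :
    Filter.atTop.limsup (fun k : ℕ => EMetric.diam
      (∑ j ∈ Finset.Ico j0 k,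
        (Matrix.toEuclideanLin (Abar ^ (k - 1 - j))) ''
          ((Matrix.toEuclideanLin A21) '' C j
            + (Matrix.toEuclideanLin Bbar) '' W j))) < ⊤ :=
  bounded_diam_through_recursion_general m no pdim m1 m2 j0 Abar A21 Bbar Q J d hQ hsim hJ hQA21
    hQBbar C W MC MW hC hW
end
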